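/- Let k be a natural number and let Γ be a singly connected, row-finite, source-free k-graph, with the partial order ≤ on objects given by u ≤ w if and only if there is a morphism w ⟶ u. Then the orbit space Γ^∞/≃ (the quotient of the infinite path space by shift equivalence, with the quotient topology) is Hausdorff if and only if for every pair U ≠ V of ultrafilters of (Γ⁰, ≤) there exist u ∈ U and v ∈ V with no common upper bound with respect to ≤ (there is no object w with u ≤ w and v ≤ w). -/

import Mathlib

open CategoryTheory

/-- A `k`-graph structure on a small category `Γ`. -/
structure KGraph (k : ℕ) (Λ : Type) [SmallCategory Λ] where
  d : ∀ {X Y : Λ}, (X ⟶ Y) → (Fin k → ℕ)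
  d_id : ∀ X : Λ, d (𝟙 X) = 0
  d_comp : ∀ {X Y Z : Λ} (f : X ⟶ Y) (g : Y ⟶ Z), d (f ≫ g) = d f + d g
  factorisation : ∀ {X Z : Λ} (f : X ⟶ Z) (m n : Fin k → ℕ), d f = m + n →
    ∃! t : Σ Y : Λ, (X ⟶ Y) × (Y ⟶ Z),
      d t.2.1 = m ∧ d t.2.2 = n ∧ t.2.1 ≫ t.2.2 = f

/-- `Γ` is row-finite and source-free. -/
def RowFiniteSourceFree {k : ℕ} {Γ : Type} [SmallCategory Γ] (S : KGraph k Γ) : Prop :=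
  ∀ (v : Γ) (n : Fin k → ℕ),
    {t : Σ u : Γ, u ⟶ v | S.d t.2 = n}.Finite ∧ {t : Σ u : Γ, u ⟶ v | S.d t.2 = n}.Nonempty

/-- An infinite path in a `k`-graph `Γ`: a (degree-preserving) functor from the opposite
of the poset category `(Fin k → ℕ, ≤)` to `Γ`, given concretely by its action `vertex`
on objects and `edge` on morphisms. -/
structure InfPath {k : ℕ} {Γ : Type} [SmallCategory Γ] (S : KGraph k Γ) where
  vertex : (Fin k → ℕ) → Γ
  edge : ∀ m n : Fin k → ℕ, m ≤ n → (vertex n ⟶ vertex m)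
  edge_refl : ∀ n, edge n n le_rfl = 𝟙 (vertex n)
  edge_comp : ∀ (m n p : Fin k → ℕ) (h₁ : m ≤ n) (h₂ : n ≤ p),
    edge m p (h₁.trans h₂) = edge n p h₂ ≫ edge m n h₁
  deg : ∀ (m n : Fin k → ℕ) (h : m ≤ n), S.d (edge m n h) = n - m

namespace InfPath

variable {k : ℕ} {Γ : Type} [SmallCategory Γ] {S : KGraph k Γ}

/-- The shift `σ^p x` of an infinite path `x`. -/
def shift (p : Fin k → ℕ) (x : InfPath S) : InfPath S where
  vertex n := x.vertex (n + p)
  edge m n h := x.edge (m + p) (n + p) (add_le_add h le_rfl)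
  edge_refl n := x.edge_refl (n + p)
  edge_comp m n q h₁ h₂ := x.edge_comp (m + p) (n + p) (q + p) _ _
  deg m n h := by
    rw [x.deg]
    funext i
    simp [Nat.add_sub_add_right]

/-- Shift equivalence of infinite paths. -/
def ShiftEquiv (x y : InfPath S) : Prop := ∃ p q, shift p x = shift q y

/-- The cylinder set of a morphism `lam : X ⟶ Y`: infinite paths whose initial segment
of degree `d lam` is `lam`. -/
def cyl {X Y : Γ} (lam : X ⟶ Y) : Set (InfPath S) :=
  {x | ∃ (h₁ : x.vertex (S.d lam) = X) (h₀ : x.vertex 0 = Y),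
    x.edge 0 (S.d lam) zero_le = eqToHom h₁ ≫ lam ≫ eqToHom h₀.symm}

/-- The topology on the infinite path space, generated by the cylinder sets. -/
def pathTopology (S : KGraph k Γ) : TopologicalSpace (InfPath S) :=
  TopologicalSpace.generateFrom {U | ∃ (X Y : Γ) (lam : X ⟶ Y), U = cyl lam}

/-- The quotient topology on the orbit space `Γ^∞/≃` of the infinite path space by
shift equivalence. -/
def orbitTopology (S : KGraph k Γ) :
    TopologicalSpace (Quot (ShiftEquiv (S := S))) :=
  (pathTopology S).coinduced (Quot.mk _)

end InfPath

open InfPath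


open InfPath

/-- The order on vertices: `u ≤ w` iff there is a morphism `w ⟶ u` (i.e. `uΓw ≠ ∅`). -/
def vle {Γ : Type} [SmallCategory Γ] (u w : Γ) : Prop := Nonempty (w ⟶ u)

/-- A filter for `(Γ⁰, ≤)`: a nonempty, upward-directed, downward-closed set of
vertices. -/
def IsVertexFilter {Γ : Type} [SmallCategory Γ] (F : Set Γ) : Prop :=
  F.Nonempty ∧
  (∀ u ∈ F, ∀ v ∈ F, ∃ w ∈ F, vle u w ∧ vle v w) ∧
  (∀ v ∈ F, ∀ u, vle u v → u ∈ F)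

/-- An ultrafilter for `(Γ⁰, ≤)`: a filter maximal under inclusion among filters. -/
def IsVertexUltrafilter {Γ : Type} [SmallCategory Γ] (F : Set Γ) : Prop :=
  IsVertexFilter F ∧ ∀ F' : Set Γ, IsVertexFilter F' → F ⊆ F' → F' = F

/-!
In a singly connected `k`-graph a morphism is determined by its endpoints, so unique
factorisation says that a vertex lying between `X` and `Z` is determined by its degree
distance to `Z`. Consequently an infinite path is determined by its vertices, the vertices
lying below some vertex of a path `x` form an ultrafilter `x.vertexFilter`, and two paths are
shift equivalent exactly when they have the same ultrafilter. Every ultrafilter arises this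
way: it has a cofinal chain (its elements above a fixed `u` are indexed by their degree
distance to `u`), and König's lemma, fed by row-finiteness, turns the chain into a path.
So the orbit space is the set of ultrafilters. The sets `{x | u ∈ x.vertexFilter}` are open
and saturated, which separates the orbits of `x` and `y` given `u ∈ x.vertexFilter` and
`v ∈ y.vertexFilter` without common upper bound. Conversely, if `x(N)` and `y(M)` lie below a
common `w`, then prepending the segments `x(0, N)` and `y(0, M)` to one path starting at `w`
gives shift equivalent paths in the basic neighbourhoods `Z(x(0, N))` and `Z(y(0, M))`.
-/

variable {k : ℕ} {Γ : Type} [SmallCategory Γ]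

local instance {S : KGraph k Γ} : TopologicalSpace (InfPath S) := pathTopology S

local instance {S : KGraph k Γ} : TopologicalSpace (Quot (ShiftEquiv (S := S))) :=
  orbitTopology S

theorem vle_refl (u : Γ) : vle u u := ⟨𝟙 u⟩

theorem vle_trans {u v w : Γ} (h₁ : vle u v) (h₂ : vle v w) : vle u w :=
  let ⟨f⟩ := h₁
  let ⟨g⟩ := h₂
  ⟨g ≫ f⟩

instance : Std.Refl (vle (Γ := Γ)) := ⟨vle_refl⟩

instance : IsTrans Γ vle := ⟨fun _ _ _ => vle_trans⟩

theorem exists_le_const (n : Fin k → ℕ) : ∃ j : ℕ, n ≤ fun _ => j :=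
  ⟨Finset.univ.sup n, fun i => Finset.le_sup (Finset.mem_univ i)⟩

theorem exists_seq_of_finite_inverse_system {X : ℕ → Type} [∀ j, Finite (X j)]
    [∀ j, Nonempty (X j)] (T : ∀ j, X (j + 1) → X j) :
    ∃ w : ∀ j, X j, ∀ j, T j (w (j + 1)) = w j := by
  let F : ℕᵒᵖ ⥤ Type := Functor.ofOpSequence fun n => TypeCat.ofHom (T n)
  have : ∀ j : ℕᵒᵖ, Finite (F.obj j) := fun j => inferInstanceAs (Finite (X j.unop))
  have : ∀ j : ℕᵒᵖ, Nonempty (F.obj j) := fun j => inferInstanceAs (Nonempty (X j.unop))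
  obtain ⟨s, hs⟩ := nonempty_sections_of_finite_inverse_system F
  refine ⟨fun j => s (Opposite.op j), fun j => ?_⟩
  have := hs (homOfLE (Nat.le_add_right j 1)).op
  rwa [Functor.ofOpSequence_map_homOfLE_succ] at this

namespace KGraph

variable (S : KGraph k Γ)

theorem d_eqToHom {X Y : Γ} (h : X = Y) : S.d (eqToHom h) = 0 := by
  subst h
  exact S.d_id X

theorem exists_factor {X Z : Γ} (f : X ⟶ Z) {n : Fin k → ℕ} (hn : n ≤ S.d f) :
    ∃ (Y : Γ) (g : X ⟶ Y) (h : Y ⟶ Z), S.d g = S.d f - n ∧ S.d h = n ∧ g ≫ h = f := by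
  obtain ⟨⟨Y, g, h⟩, hgh, -⟩ := S.factorisation f (S.d f - n) n (tsub_add_cancel_of_le hn).symm
  exact ⟨Y, g, h, hgh⟩

theorem obj_eq_of_comp_eq {X Y Y' Z : Γ} {g : X ⟶ Y} {h : Y ⟶ Z} {g' : X ⟶ Y'}
    {h' : Y' ⟶ Z} (hc : g ≫ h = g' ≫ h') (hd : S.d h = S.d h') : Y = Y' := by
  obtain ⟨t, -, huniq⟩ := S.factorisation (g ≫ h) (S.d g) (S.d h) (S.d_comp g h)
  have hg : S.d g' = S.d g := add_right_cancel (by rw [← S.d_comp, ← hc, S.d_comp, hd])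
  exact congrArg Sigma.fst
    ((huniq ⟨Y, g, h⟩ ⟨rfl, rfl, rfl⟩).trans (huniq ⟨Y', g', h'⟩ ⟨hg, hd.symm, hc.symm⟩).symm)

variable [Quiver.IsThin Γ]

theorem obj_eq_of_d_eq {X Y Y' Z : Γ} (g : X ⟶ Y) (h : Y ⟶ Z) (g' : X ⟶ Y') (h' : Y' ⟶ Z)
    (hd : S.d h = S.d h') : Y = Y' :=
  S.obj_eq_of_comp_eq (g := g) (g' := g') (Subsingleton.elim _ _) hd

end KGraph

/-- The elements of `F` above a fixed `u ∈ F` are determined by their degree distance to `u`,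
so they form a countable directed set. -/
theorem KGraph.exists_cofinal_chain [Quiver.IsThin Γ] (S : KGraph k Γ) {F : Set Γ}
    (hF : IsVertexFilter F) :
    ∃ v : ℕ → Γ, (∀ j, vle (v j) (v (j + 1))) ∧ ∀ a ∈ F, ∃ j, vle a (v j) := by
  obtain ⟨⟨u, hu⟩, hdir, -⟩ := hF
  let T := {t : Γ // t ∈ F ∧ vle u t}
  have hinj : Function.Injective fun t : T => S.d t.2.2.some := by
    intro t t' hd
    obtain ⟨s, -, ⟨a⟩, ⟨a'⟩⟩ := hdir t t.2.1 t' t'.2.1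
    exact Subtype.ext (S.obj_eq_of_d_eq a _ a' _ hd)
  have : Encodable T := @Encodable.ofCountable _ hinj.countable
  have : Inhabited T := ⟨⟨u, hu, vle_refl u⟩⟩
  have hdirT : Directed vle (Subtype.val : T → Γ) := fun t t' => by
    obtain ⟨s, hs, h₁, h₂⟩ := hdir t t.2.1 t' t'.2.1
    exact ⟨⟨s, hs, vle_trans t.2.2 h₁⟩, h₁, h₂⟩
  refine ⟨fun j => (hdirT.sequence _ j).1, hdirT.sequence_mono_nat, fun a ha => ?_⟩
  obtain ⟨s, hs, h₁, h₂⟩ := hdir a ha u hu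
  exact ⟨_, vle_trans h₁ (hdirT.rel_sequence ⟨s, hs, h₂⟩)⟩

namespace InfPath

variable {S : KGraph k Γ}

theorem d_edge_zero (x : InfPath S) (n : Fin k → ℕ) : S.d (x.edge 0 n zero_le) = n := by
  rw [x.deg, tsub_zero]

def vertexFilter (x : InfPath S) : Set Γ := {u | ∃ n, vle u (x.vertex n)}

theorem vertex_mem_vertexFilter (x : InfPath S) (n : Fin k → ℕ) :
    x.vertex n ∈ x.vertexFilter :=
  ⟨n, vle_refl _⟩

theorem isVertexFilter_vertexFilter (x : InfPath S) : IsVertexFilter x.vertexFilter := by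
  refine ⟨⟨_, x.vertex_mem_vertexFilter 0⟩, ?_, ?_⟩
  · rintro u ⟨m, hu⟩ v ⟨n, hv⟩
    exact ⟨_, x.vertex_mem_vertexFilter (m ⊔ n), vle_trans hu ⟨x.edge m _ le_sup_left⟩,
      vle_trans hv ⟨x.edge n _ le_sup_right⟩⟩
  · rintro v ⟨n, hv⟩ u hu
    exact ⟨n, vle_trans hu hv⟩

theorem vertexFilter_shift (p : Fin k → ℕ) (x : InfPath S) :
    (shift p x).vertexFilter = x.vertexFilter := by
  ext u
  constructor
  · rintro ⟨n, hu⟩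
    exact ⟨n + p, hu⟩
  · rintro ⟨n, hu⟩
    exact ⟨n, vle_trans hu ⟨x.edge n (n + p) le_self_add⟩⟩

theorem vertexFilter_eq_of_shiftEquiv {x y : InfPath S} (h : ShiftEquiv x y) :
    x.vertexFilter = y.vertexFilter := by
  obtain ⟨p, q, h⟩ := h
  rw [← vertexFilter_shift p x, h, vertexFilter_shift]

def orbitFilter : Quot (ShiftEquiv (S := S)) → Set Γ :=
  Quot.lift vertexFilter fun _ _ => vertexFilter_eq_of_shiftEquiv

/-- König's lemma: row-finiteness makes the sets of degree-`(j, …, j)` morphisms into `v j`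
finite, and compatible choices in them form a chain above `v`. -/
theorem exists_chain_above (hrf : RowFiniteSourceFree S) {v : ℕ → Γ}
    (hv : ∀ j, vle (v j) (v (j + 1))) :
    ∃ (z : ℕ → Γ) (f : ∀ j, z j ⟶ v j), (∀ j, S.d (f j) = fun _ => j) ∧
      ∀ j, vle (z j) (z (j + 1)) := by
  let A (j : ℕ) := {t : Σ y : Γ, y ⟶ v j | S.d t.2 = fun _ => j}
  have : ∀ j, Finite (A j) := fun j => (hrf (v j) _).1.to_subtype
  have : ∀ j, Nonempty (A j) := fun j => (hrf (v j) _).2.to_subtype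
  have hstep : ∀ j (t : A (j + 1)), ∃ t' : A j, vle t'.1.1 t.1.1 := by
    rintro j ⟨⟨y, f⟩, hf⟩
    obtain ⟨e⟩ := hv j
    have hle : (fun _ => j) ≤ S.d (f ≫ e) := by
      rw [S.d_comp, hf]
      exact le_add_right fun _ => Nat.le_succ j
    obtain ⟨y', g, h, -, hh, -⟩ := S.exists_factor (f ≫ e) hle
    exact ⟨⟨⟨y', h⟩, hh⟩, ⟨g⟩⟩
  choose T hT using hstep
  obtain ⟨w, hw⟩ := exists_seq_of_finite_inverse_system (X := fun j => A j) T
  exact ⟨fun j => (w j).1.1, fun j => (w j).1.2, fun j => (w j).2,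
    fun j => by simpa only [hw] using hT j (w (j + 1))⟩

theorem isOpen_cyl {X Y : Γ} (lam : X ⟶ Y) : IsOpen (cyl (S := S) lam) :=
  TopologicalSpace.isOpen_generateFrom_of_mem ⟨X, Y, lam, rfl⟩

end InfPath

namespace InfPath

variable {S : KGraph k Γ} [Quiver.IsThin Γ]

theorem ext_vertex {x y : InfPath S} (h : x.vertex = y.vertex) : x = y := by
  cases x
  cases y
  subst h
  congr
  funext _ _ _
  exact Subsingleton.elim _ _

noncomputable def ofVertex (v : (Fin k → ℕ) → Γ)
    (h : ∀ m n, m ≤ n → ∃ f : v n ⟶ v m, S.d f = n - m) : InfPath S where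
  vertex := v
  edge m n hmn := (h m n hmn).choose
  edge_refl _ := Subsingleton.elim _ _
  edge_comp _ _ _ _ _ := Subsingleton.elim _ _
  deg m n hmn := (h m n hmn).choose_spec

theorem vertex_eq_of_hom {x z : InfPath S} (h₀ : z.vertex 0 = x.vertex 0) {n : Fin k → ℕ}
    {X : Γ} (a : X ⟶ z.vertex n) (b : X ⟶ x.vertex n) : z.vertex n = x.vertex n :=
  S.obj_eq_of_d_eq a (z.edge 0 n zero_le ≫ eqToHom h₀) b (x.edge 0 n zero_le) <| by
    rw [S.d_comp, S.d_eqToHom, add_zero, d_edge_zero, d_edge_zero]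

theorem shiftEquiv_of_vertexFilter_eq {x y : InfPath S}
    (h : x.vertexFilter = y.vertexFilter) : ShiftEquiv x y := by
  obtain ⟨a, ⟨f⟩⟩ : y.vertex 0 ∈ x.vertexFilter := h ▸ y.vertex_mem_vertexFilter 0
  refine ⟨a, S.d f, ext_vertex (funext fun n => ?_)⟩
  obtain ⟨b, ⟨g⟩⟩ : x.vertex (n + a) ∈ y.vertexFilter := h ▸ x.vertex_mem_vertexFilter (n + a)
  show x.vertex (n + a) = y.vertex (n + S.d f)
  exact S.obj_eq_of_d_eq (y.edge b (b ⊔ (n + S.d f)) le_sup_left ≫ g)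
    (x.edge a (n + a) le_add_self ≫ f) (y.edge (n + S.d f) _ le_sup_right)
    (y.edge 0 (n + S.d f) zero_le) (by rw [S.d_comp, x.deg, d_edge_zero, add_tsub_cancel_right])

theorem isVertexUltrafilter_vertexFilter (x : InfPath S) :
    IsVertexUltrafilter x.vertexFilter := by
  refine ⟨x.isVertexFilter_vertexFilter, fun F hF hxF => Set.Subset.antisymm (fun w hw => ?_) hxF⟩
  obtain ⟨z, hz, hwz, ⟨f⟩⟩ := hF.2.1 w hw _ (hxF (x.vertex_mem_vertexFilter 0))
  obtain ⟨t, -, ⟨a⟩, ⟨b⟩⟩ := hF.2.1 z hz _ (hxF (x.vertex_mem_vertexFilter (S.d f)))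
  have hz : z = x.vertex (S.d f) :=
    S.obj_eq_of_d_eq a f b (x.edge 0 _ zero_le) (d_edge_zero x _).symm
  exact ⟨S.d f, hz ▸ hwz⟩

theorem exists_path_of_chain_above {v : Γ} {W : ℕ → Γ} (g : ∀ j, W j ⟶ v)
    (hW : ∀ ⦃i j⦄, i ≤ j → vle (W i) (W j)) (hg : ∀ n, ∃ j, n ≤ S.d (g j)) :
    ∃ x : InfPath S, ∀ j {Y : Γ} (_ : W j ⟶ Y) (b : Y ⟶ v), x.vertex (S.d b) = Y := by
  choose J hJ using hg
  have hfac : ∀ n, ∃ (Y : Γ) (_ : W (J n) ⟶ Y) (b : Y ⟶ v), S.d b = n := fun n => by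
    obtain ⟨Y, a, b, -, hb, -⟩ := S.exists_factor (g (J n)) (hJ n)
    exact ⟨Y, a, b, hb⟩
  choose Y a b hb using hfac
  have hY : ∀ j {Y' : Γ} (_ : W j ⟶ Y') (b' : Y' ⟶ v), Y (S.d b') = Y' := by
    intro j Y' a' b'
    obtain ⟨e⟩ := hW (le_max_right j (J (S.d b')))
    obtain ⟨e'⟩ := hW (le_max_left j (J (S.d b')))
    exact S.obj_eq_of_d_eq (e ≫ a _) (b _) (e' ≫ a') b' (hb _)
  refine ⟨ofVertex Y fun m n hmn => ?_, hY⟩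
  obtain ⟨Y', e, b', he, hb', -⟩ := S.exists_factor (b n) ((hb n).symm ▸ hmn)
  have hY' : Y m = Y' := hb' ▸ hY (J n) (a n ≫ e) b'
  exact ⟨e ≫ eqToHom hY'.symm, by rw [S.d_comp, S.d_eqToHom, add_zero, he, hb n]⟩

theorem exists_path_of_chain (hrf : RowFiniteSourceFree S) {v : ℕ → Γ}
    (hv : ∀ j, vle (v j) (v (j + 1))) :
    ∃ x : InfPath S, x.vertex 0 = v 0 ∧ ∀ j, v j ∈ x.vertexFilter := by
  obtain ⟨z, f, hf, hz⟩ := exists_chain_above hrf hv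
  have hv₀ j : vle (v 0) (v j) := Nat.rel_of_forall_rel_succ_of_le vle hv j.zero_le
  let g j : z j ⟶ v 0 := f j ≫ (hv₀ j).some
  have hg n : ∃ j, n ≤ S.d (g j) := by
    obtain ⟨j, hj⟩ := exists_le_const n
    refine ⟨j, hj.trans ?_⟩
    rw [S.d_comp, hf]
    exact le_self_add
  obtain ⟨x, hx⟩ := exists_path_of_chain_above g (Nat.rel_of_forall_rel_succ_of_le vle hz) hg
  refine ⟨x, by simpa only [S.d_id] using hx 0 (g 0) (𝟙 _), fun j => ⟨S.d (g j), ?_⟩⟩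
  rw [hx j (𝟙 _) (g j)]
  exact ⟨f j⟩

theorem exists_vertex_zero_eq (hrf : RowFiniteSourceFree S) (w : Γ) :
    ∃ x : InfPath S, x.vertex 0 = w :=
  let ⟨x, hx, _⟩ := exists_path_of_chain hrf (v := fun _ => w) fun _ => vle_refl w
  ⟨x, hx⟩

theorem exists_vertexFilter_eq (hrf : RowFiniteSourceFree S) {U : Set Γ}
    (hU : IsVertexUltrafilter U) : ∃ x : InfPath S, x.vertexFilter = U := by
  obtain ⟨v, hv, hcof⟩ := S.exists_cofinal_chain hU.1
  obtain ⟨x, -, hx⟩ := exists_path_of_chain hrf hv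
  refine ⟨x, hU.2 _ x.isVertexFilter_vertexFilter fun a ha => ?_⟩
  obtain ⟨j, haj⟩ := hcof a ha
  obtain ⟨n, hjn⟩ := hx j
  exact ⟨n, vle_trans haj hjn⟩

theorem exists_shiftEquiv_of_hom (zh : InfPath S) {v : Γ} (f : zh.vertex 0 ⟶ v) :
    ∃ z : InfPath S, ShiftEquiv z zh ∧
      ∀ {Y : Γ} (_ : zh.vertex 0 ⟶ Y) (b : Y ⟶ v), z.vertex (S.d b) = Y := by
  let g (j : ℕ) : zh.vertex (fun _ => j) ⟶ v := zh.edge 0 _ zero_le ≫ f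
  have hg n : ∃ j, n ≤ S.d (g j) := by
    obtain ⟨j, hj⟩ := exists_le_const n
    refine ⟨j, hj.trans ?_⟩
    rw [S.d_comp, d_edge_zero]
    exact le_self_add
  obtain ⟨z, hz⟩ := exists_path_of_chain_above g (fun _ _ hij => ⟨zh.edge _ _ fun _ => hij⟩) hg
  refine ⟨z, ⟨S.d f, 0, ext_vertex (funext fun n => ?_)⟩,
    fun a b => hz 0 (zh.edge 0 _ zero_le ≫ a) b⟩
  obtain ⟨j, hj⟩ := exists_le_const n
  have := hz j (zh.edge n _ hj) (zh.edge 0 n zero_le ≫ f)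
  rw [S.d_comp, d_edge_zero] at this
  exact this.trans (congrArg zh.vertex (add_zero n).symm)

theorem mem_cyl_iff {X Y : Γ} {lam : X ⟶ Y} {z : InfPath S} :
    z ∈ cyl lam ↔ z.vertex 0 = Y ∧ z.vertex (S.d lam) = X :=
  ⟨fun ⟨h₁, h₀, _⟩ => ⟨h₀, h₁⟩, fun ⟨h₀, h₁⟩ => ⟨h₁, h₀, Subsingleton.elim _ _⟩⟩

theorem mem_cyl_edge_iff {x z : InfPath S} {N : Fin k → ℕ} :
    z ∈ cyl (x.edge 0 N zero_le) ↔ z.vertex 0 = x.vertex 0 ∧ z.vertex N = x.vertex N := by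
  rw [mem_cyl_iff, d_edge_zero]

theorem cyl_edge_anti (x : InfPath S) {N N' : Fin k → ℕ} (h : N ≤ N') :
    cyl (S := S) (x.edge 0 N' zero_le) ⊆ cyl (x.edge 0 N zero_le) := by
  intro z hz
  rw [mem_cyl_edge_iff] at hz ⊢
  exact ⟨hz.1, vertex_eq_of_hom hz.1 (z.edge N N' h) (eqToHom hz.2 ≫ x.edge N N' h)⟩

theorem exists_cyl_edge_subset {O : Set (InfPath S)} (hO : IsOpen O) {x : InfPath S}
    (hx : x ∈ O) : ∃ N, cyl (x.edge 0 N zero_le) ⊆ O := by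
  induction hO generalizing x with
  | basic O hO =>
    obtain ⟨X, Y, lam, rfl⟩ := hO
    obtain ⟨h₀, h₁⟩ := mem_cyl_iff.1 hx
    refine ⟨S.d lam, fun z hz => mem_cyl_iff.2 ?_⟩
    rw [mem_cyl_edge_iff] at hz
    exact ⟨hz.1.trans h₀, hz.2.trans h₁⟩
  | univ => exact ⟨0, Set.subset_univ _⟩
  | inter O O' _ _ ih ih' =>
    obtain ⟨N, hN⟩ := ih hx.1
    obtain ⟨N', hN'⟩ := ih' hx.2
    exact ⟨N ⊔ N', Set.subset_inter ((cyl_edge_anti x le_sup_left).trans hN)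
      ((cyl_edge_anti x le_sup_right).trans hN')⟩
  | sUnion 𝒪 _ ih =>
    obtain ⟨O, hO, hxO⟩ := hx
    obtain ⟨N, hN⟩ := ih O hO hxO
    exact ⟨N, hN.trans (Set.subset_sUnion_of_mem hO)⟩

theorem exists_shiftEquiv_mem_cyl_edge (x : InfPath S) (N : Fin k → ℕ) (zh : InfPath S)
    (h : vle (x.vertex N) (zh.vertex 0)) :
    ∃ z ∈ cyl (x.edge 0 N zero_le), ShiftEquiv z zh := by
  obtain ⟨e⟩ := h
  obtain ⟨z, hzzh, hz⟩ := exists_shiftEquiv_of_hom zh (e ≫ x.edge 0 N zero_le)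
  refine ⟨z, mem_cyl_edge_iff.2 ⟨?_, ?_⟩, hzzh⟩
  · simpa only [S.d_id] using hz (e ≫ x.edge 0 N zero_le) (𝟙 _)
  · simpa only [d_edge_zero] using hz e (x.edge 0 N zero_le)

theorem isOpen_setOf_mem_vertexFilter (u : Γ) :
    IsOpen {z : InfPath S | u ∈ z.vertexFilter} :=
  isOpen_iff_forall_mem_open.2 fun z ⟨n, hn⟩ =>
    ⟨cyl (z.edge 0 n zero_le), fun _ hz' => ⟨n, (mem_cyl_edge_iff.1 hz').2 ▸ hn⟩,
      isOpen_cyl _, mem_cyl_edge_iff.2 ⟨rfl, rfl⟩⟩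

theorem orbitFilter_injective : Function.Injective (orbitFilter (S := S)) := by
  rintro ⟨x⟩ ⟨y⟩ h
  exact Quot.sound (shiftEquiv_of_vertexFilter_eq h)

theorem isVertexUltrafilter_orbitFilter (q : Quot (ShiftEquiv (S := S))) :
    IsVertexUltrafilter (orbitFilter q) := by
  rcases q with ⟨x⟩
  exact x.isVertexUltrafilter_vertexFilter

theorem isOpen_setOf_mem_orbitFilter (u : Γ) :
    IsOpen {q : Quot (ShiftEquiv (S := S)) | u ∈ orbitFilter q} :=
  isOpen_coinduced.2 (isOpen_setOf_mem_vertexFilter u)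

end InfPath

/-- for a singly connected row-finite source-free `k`-graph, the orbit
space `Γ^∞/≃` is Hausdorff if and only if any two distinct ultrafilters of `(Γ⁰, ≤)`
contain elements with no common upper bound. -/
theorem orbit_space_hausdorff_iff_ultrafilters (k : ℕ) (Γ : Type) [SmallCategory Γ]
    (S : KGraph k Γ) (hsc : ∀ X Y : Γ, Subsingleton (X ⟶ Y))
    (hrf : RowFiniteSourceFree S) :
    @T2Space _ (orbitTopology S) ↔
      ∀ U V : Set Γ, IsVertexUltrafilter U → IsVertexUltrafilter V → U ≠ V →
        ∃ u ∈ U, ∃ v ∈ V, ¬ ∃ w : Γ, vle u w ∧ vle v w := by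
  have : Quiver.IsThin Γ := hsc
  constructor
  · intro _ U V hU hV hUV
    obtain ⟨x, rfl⟩ := exists_vertexFilter_eq hrf hU
    obtain ⟨y, rfl⟩ := exists_vertexFilter_eq hrf hV
    obtain ⟨O, O', hO, hO', hxO, hyO', hOO'⟩ :=
      t2_separation (x := Quot.mk _ x) (y := Quot.mk _ y) fun h => hUV (congrArg orbitFilter h)
    obtain ⟨N, hN⟩ := exists_cyl_edge_subset (isOpen_coinduced.1 hO) hxO
    obtain ⟨M, hM⟩ := exists_cyl_edge_subset (isOpen_coinduced.1 hO') hyO'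
    refine ⟨_, x.vertex_mem_vertexFilter N, _, y.vertex_mem_vertexFilter M, ?_⟩
    rintro ⟨w, hxw, hyw⟩
    obtain ⟨zh, rfl⟩ := exists_vertex_zero_eq hrf w
    obtain ⟨z, hz, hzzh⟩ := exists_shiftEquiv_mem_cyl_edge x N zh hxw
    obtain ⟨z', hz', hz'zh⟩ := exists_shiftEquiv_mem_cyl_edge y M zh hyw
    exact hOO'.ne_of_mem (hN hz) (hM hz') ((Quot.sound hzzh).trans (Quot.sound hz'zh).symm)
  · refine fun h => ⟨fun a b hab => ?_⟩
    obtain ⟨u, hu, v, hv, huv⟩ := h _ _ (isVertexUltrafilter_orbitFilter a)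
      (isVertexUltrafilter_orbitFilter b) (orbitFilter_injective.ne hab)
    refine ⟨_, _, isOpen_setOf_mem_orbitFilter u, isOpen_setOf_mem_orbitFilter v, hu, hv,
      Set.disjoint_left.2 fun q hqu hqv => huv ?_⟩
    obtain ⟨w, -, huw, hvw⟩ := (isVertexUltrafilter_orbitFilter q).1.2.1 u hqu v hqv
    exact ⟨w, huw, hvw⟩
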